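/- Let F be a finite field of odd cardinality q, ψ a nontrivial additive character of F with values in ℂ, χ the quadratic character of F, V an F-vector space of finite dimension n, and Q a quadratic form on V whose associated polar bilinear form is nondegenerate. If (χ(−1))ⁿ = 1, then ∑_{v ∈ V} ψ(Q(v)) = ε · q^{n/2} for some sign ε ∈ {+1, −1}. -/

import Mathlib

open Finset

section Aux

variable {F : Type*} [Field F] [Fintype F] [DecidableEq F]

lemma pm_sign_pow {x : ℂ} (hx : x = 1 ∨ x = -1) (m : ℕ) : x ^ m = 1 ∨ x ^ m = -1 := by
  rcases hx with h | h <;> subst h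
  · left; simp
  · rcases Nat.even_or_odd m with h | h
    · left; exact h.neg_one_pow
    · right; exact h.neg_one_pow

lemma addChar_map_sum {A M : Type*} [AddCommMonoid A] [CommMonoid M] {ι : Type*}
    (ψ : AddChar A M) (s : Finset ι) (f : ι → A) :
    ψ (∑ i ∈ s, f i) = ∏ i ∈ s, ψ (f i) := by
  classical
  induction s using Finset.induction_on with
  | empty => simp
  | @insert a s h ih => rw [Finset.sum_insert h, Finset.prod_insert h, ψ.map_add_eq_mul, ih]

/-- The quadratic character with values in ℂ. -/
noncomputable def qchar (F : Type*) [Field F] [Fintype F] [DecidableEq F] : MulChar F ℂ :=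
  (quadraticChar F).ringHomComp (Int.castRingHom ℂ)

lemma qchar_ne_one (hF : ringChar F ≠ 2) : qchar F ≠ 1 :=
  (MulChar.ringHomComp_ne_one_iff (RingHom.injective_int _)).mpr (quadraticChar_ne_one hF)

lemma qchar_isQuadratic : (qchar F).IsQuadratic :=
  (quadraticChar_isQuadratic F).comp _

lemma qchar_unit_sq (a : Fˣ) : qchar F (a : F) * qchar F (a : F) = 1 := by
  rw [← map_mul]
  have : ((a : F) * (a : F)) = (a : F) ^ 2 := by ring
  rw [this]
  simp [qchar, quadraticChar_sq_one' (a.ne_zero)]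

lemma qchar_unit_dichotomy (a : Fˣ) : qchar F (a : F) = 1 ∨ qchar F (a : F) = -1 := by
  rcases quadraticChar_dichotomy (a.ne_zero) with h | h <;>
    simp [qchar, h]

/-- One-dimensional quadratic Gauss sum. -/
lemma sum_psi_mul_sq (hF : ringChar F ≠ 2) (ψ : AddChar F ℂ) (hψ : ψ ≠ 1) (a : Fˣ) :
    ∑ y : F, ψ ((a : F) * y ^ 2) = qchar F (a : F) * gaussSum (qchar F) ψ := by
  classical
  have h1 : ∑ y : F, ψ ((a : F) * y ^ 2)
      = ∑ t : F, ∑ y ∈ univ.filter (fun y : F => y ^ 2 = t), ψ ((a : F) * y ^ 2) := by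
    rw [Finset.sum_fiberwise_of_maps_to (fun y _ => Finset.mem_univ (y ^ 2))]
  have h2 : ∀ t : F, ∑ y ∈ univ.filter (fun y : F => y ^ 2 = t), ψ ((a : F) * y ^ 2)
      = ((quadraticChar F t : ℂ) + 1) * ψ ((a : F) * t) := by
    intro t
    have hcard : (((univ.filter (fun y : F => y ^ 2 = t)).card : ℤ))
        = quadraticChar F t + 1 := by
      have h := quadraticChar_card_sqrts hF t
      rwa [show ({x : F | x ^ 2 = t}.toFinset) = univ.filter (fun y : F => y ^ 2 = t) by
        ext x; simp] at h
    calc ∑ y ∈ univ.filter (fun y : F => y ^ 2 = t), ψ ((a : F) * y ^ 2)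
        = ∑ _y ∈ univ.filter (fun y : F => y ^ 2 = t), ψ ((a : F) * t) := by
          apply Finset.sum_congr rfl
          intro y hy
          rw [Finset.mem_filter] at hy
          rw [hy.2]
      _ = ((univ.filter (fun y : F => y ^ 2 = t)).card : ℂ) * ψ ((a : F) * t) := by
          rw [Finset.sum_const, nsmul_eq_mul]
      _ = ((quadraticChar F t : ℂ) + 1) * ψ ((a : F) * t) := by
          congr 1
          have h3 : (((univ.filter (fun y : F => y ^ 2 = t)).card : ℤ) : ℂ)
              = ((quadraticChar F t : ℤ) : ℂ) + 1 := by
            rw [hcard]; push_cast; ring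
          push_cast at h3 ⊢
          exact h3
  rw [h1]
  simp_rw [h2, add_mul, one_mul, Finset.sum_add_distrib]
  have h3 : ∑ t : F, ψ ((a : F) * t) = 0 := by
    have hψ0 : ψ ≠ 0 := by
      rwa [AddChar.one_eq_zero] at hψ
    have hb : ∑ t : F, ψ ((a : F) * t) = ∑ s : F, ψ s :=
      Fintype.sum_bijective (fun t : F => (a : F) * t) (Units.mulLeft_bijective a) _ _
        (fun x => rfl)
    rw [hb]
    exact AddChar.sum_eq_zero_iff_ne_zero.mpr hψ0
  have h4 : ∑ t : F, (quadraticChar F t : ℂ) * ψ ((a : F) * t)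
      = qchar F (a : F) * gaussSum (qchar F) ψ := by
    have hgs : ∑ t : F, (quadraticChar F t : ℂ) * ψ ((a : F) * t)
        = gaussSum (qchar F) (ψ.mulShift (a : F)) := by
      simp only [gaussSum, AddChar.mulShift_apply]
      rfl
    rw [hgs, ← gaussSum_mulShift (qchar F) ψ a, ← mul_assoc, qchar_unit_sq, one_mul]
  rw [h4, h3, add_zero]

/-- Power of the Gauss sum. -/
lemma gaussSum_pow (hF : ringChar F ≠ 2) (ψ : AddChar F ℂ) (hψ : ψ ≠ 1) (n : ℕ)
    (hchi : (quadraticChar F (-1) : ℤ) ^ n = 1) :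
    ∃ ε : ℂ, (ε = 1 ∨ ε = -1) ∧
      (gaussSum (qchar F) ψ) ^ n
        = ε * (((Fintype.card F : ℝ) ^ ((n : ℝ) / 2) : ℝ) : ℂ) := by
  have hq0 : (0 : ℝ) ≤ (Fintype.card F : ℝ) := Nat.cast_nonneg _
  have hprim : ψ.IsPrimitive := AddChar.IsPrimitive.of_ne_one hψ
  have hsq : (gaussSum (qchar F) ψ) ^ 2
      = qchar F (-1) * Fintype.card F :=
    gaussSum_sq (qchar_ne_one hF) qchar_isQuadratic hprim
  rcases Nat.even_or_odd n with he | ho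
  · obtain ⟨m, hm⟩ := he
    have hn2 : n = 2 * m := by omega
    have hrpow : (((Fintype.card F : ℝ) ^ ((n : ℝ) / 2) : ℝ) : ℂ)
        = ((Fintype.card F : ℂ)) ^ m := by
      have : ((n : ℝ) / 2) = (m : ℝ) := by rw [hn2]; push_cast; ring
      rw [this, Real.rpow_natCast]
      push_cast
      ring
    have hq1 : qchar F (-1 : F) = 1 ∨ qchar F (-1 : F) = -1 := by
      rcases quadraticChar_dichotomy (a := (-1 : F)) (neg_ne_zero.mpr one_ne_zero) with h | h <;>
        simp [qchar, h]
    refine ⟨(qchar F (-1 : F)) ^ m, pm_sign_pow hq1 m, ?_⟩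
    rw [show (gaussSum (qchar F) ψ) ^ n = ((gaussSum (qchar F) ψ) ^ 2) ^ m by
      rw [hn2, pow_mul], hsq, mul_pow, hrpow]
  · -- n odd forces quadraticChar F (-1) = 1
    have hneg1 : (quadraticChar F (-1) : ℤ) = 1 := by
      rcases quadraticChar_dichotomy (a := (-1 : F)) (neg_ne_zero.mpr one_ne_zero) with h | h
      · exact h
      · exfalso
        rw [h, Odd.neg_one_pow ho] at hchi
        norm_num at hchi
    have hq1 : qchar F (-1 : F) = 1 := by
      simp [qchar, hneg1]
    set s : ℝ := Real.sqrt (Fintype.card F) with hs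
    have hs2 : ((s : ℂ)) ^ 2 = (Fintype.card F : ℂ) := by
      have : s ^ 2 = (Fintype.card F : ℝ) := Real.sq_sqrt hq0
      calc ((s : ℂ)) ^ 2 = ((s ^ 2 : ℝ) : ℂ) := by push_cast; ring
        _ = (Fintype.card F : ℂ) := by rw [this]; push_cast; ring
    have hg2 : (gaussSum (qchar F) ψ) ^ 2 = ((s : ℂ)) ^ 2 := by
      rw [hsq, hq1, one_mul, hs2]
    have hcase : gaussSum (qchar F) ψ = (s : ℂ) ∨ gaussSum (qchar F) ψ = -(s : ℂ) := by
      have h0 : (gaussSum (qchar F) ψ - (s : ℂ)) * (gaussSum (qchar F) ψ + (s : ℂ)) = 0 := by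
        linear_combination hg2
      rcases mul_eq_zero.mp h0 with h | h
      · left; exact sub_eq_zero.mp h
      · right; exact add_eq_zero_iff_eq_neg.mp h
    have hsn : ((s : ℂ)) ^ n = (((Fintype.card F : ℝ) ^ ((n : ℝ) / 2) : ℝ) : ℂ) := by
      have hr : s ^ n = (Fintype.card F : ℝ) ^ ((n : ℝ) / 2) := by
        rw [hs, Real.sqrt_eq_rpow, ← Real.rpow_natCast ((Fintype.card F : ℝ) ^ ((1:ℝ)/2)) n,
          ← Real.rpow_mul hq0]
        congr 1
        ring
      calc ((s : ℂ)) ^ n = ((s ^ n : ℝ) : ℂ) := by push_cast; ring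
        _ = _ := by rw [hr]
    rcases hcase with h | h
    · exact ⟨1, Or.inl rfl, by rw [h, hsn, one_mul]⟩
    · refine ⟨(-1) ^ n, ?_, ?_⟩
      · rcases Nat.even_or_odd n with hn' | hn'
        · left; exact hn'.neg_one_pow
        · right; exact hn'.neg_one_pow
      · rw [h, neg_pow, hsn]

end Aux

/-- if `χ(−1)ⁿ = 1`, then the quadratic Gauss sum of a nondegenerate
quadratic form on an `n`-dimensional space over a finite field of odd cardinality `q`
equals `ε · q^{n/2}` for a sign `ε ∈ {+1, −1}`. -/
theorem gauss_sum_quadratic_form_is_sign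
    (F : Type*) [Field F] [Fintype F] [DecidableEq F]
    (hq : Odd (Fintype.card F))
    (ψ : AddChar F ℂ) (hψ : ψ ≠ 1)
    (V : Type*) [AddCommGroup V] [Module F V] [Fintype V]
    (Q : QuadraticForm F V)
    (hQ : LinearMap.BilinForm.Nondegenerate (QuadraticMap.polarBilin Q))
    (hchi : (quadraticChar F (-1) : ℤ) ^ (Module.finrank F V) = 1) :
    ∃ ε : ℂ, (ε = 1 ∨ ε = -1) ∧
      (∑ v : V, ψ (Q v)) =
        ε * (((Fintype.card F : ℝ) ^ ((Module.finrank F V : ℝ) / 2) : ℝ) : ℂ) := by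
  classical
  have hF2 : ringChar F ≠ 2 := by
    intro h
    have := FiniteField.even_card_iff_char_two.mp h
    rw [Nat.odd_iff] at hq
    omega
  haveI : Invertible (2 : F) := invertibleOfNonzero (Ring.two_ne_zero hF2)
  set n := Module.finrank F V with hn
  have hsep : (QuadraticMap.associated (R := F) Q).SeparatingLeft := by
    intro x hx
    apply hQ.1 x
    intro y
    have h2 : QuadraticMap.polarBilin Q x y
        = 2 • (QuadraticMap.associated (R := F) Q x y) := by
      have h' := congrArg (fun B : LinearMap.BilinForm F V => B x y)
        (QuadraticMap.two_nsmul_associated F Q)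
      simp only [LinearMap.smul_apply] at h'
      exact h'.symm
    rw [h2, hx y, smul_zero]
  obtain ⟨w, ⟨e⟩⟩ := Q.equivalent_weightedSumSquares_units_of_nondegenerate' hsep
  have hsum : (∑ v : V, ψ (Q v))
      = ∑ x : Fin n → F, ψ (QuadraticMap.weightedSumSquares F w x) :=
    Fintype.sum_equiv e.toEquiv _ _ (fun v => (congrArg ψ (e.map_app v)).symm)
  have hdiag : ∑ x : Fin n → F, ψ (QuadraticMap.weightedSumSquares F w x)
      = (∏ i, qchar F ((w i : F))) * (gaussSum (qchar F) ψ) ^ n := by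
    have happ : ∀ x : Fin n → F, ψ (QuadraticMap.weightedSumSquares F w x)
        = ∏ i, ψ ((w i : F) * (x i) ^ 2) := by
      intro x
      rw [QuadraticMap.weightedSumSquares_apply]
      rw [show (∑ i, w i • (x i * x i)) = ∑ i, (w i : F) * (x i) ^ 2 from
        Finset.sum_congr rfl fun i _ => by rw [Units.smul_def, smul_eq_mul]; ring]
      exact addChar_map_sum ψ _ _
    simp_rw [happ]
    rw [← Fintype.prod_sum (fun i (y : F) => ψ ((w i : F) * y ^ 2))]
    rw [Finset.prod_congr rfl (fun i _ => sum_psi_mul_sq hF2 ψ hψ (w i))]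
    rw [Finset.prod_mul_distrib, Finset.prod_const, card_univ, Fintype.card_fin]
  obtain ⟨ε₁, hε₁, hg⟩ := gaussSum_pow hF2 ψ hψ n hchi
  have hc : (∏ i, qchar F ((w i : F))) = 1 ∨ (∏ i, qchar F ((w i : F))) = -1 := by
    induction (univ : Finset (Fin n)) using Finset.induction_on with
    | empty => left; simp
    | @insert a s h ih =>
        rw [Finset.prod_insert h]
        rcases ih with ih | ih <;> rcases qchar_unit_dichotomy (w a) with h' | h' <;>
          rw [ih, h'] <;> norm_num
  refine ⟨(∏ i, qchar F ((w i : F))) * ε₁, ?_, ?_⟩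
  · rcases hc with h | h <;> rcases hε₁ with h' | h' <;> simp [h, h']
  · rw [hsum, hdiag, hg]
    ring
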